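/- arXiv:math-ph/0701041 — 4 statements merged into one kernel-verified Lean document; each statement's English description precedes it below -/
import Mathlib

section
/- If ξ, ψ, θ, x, y, u, and λ are differentiable functions (of one real variable) satisfying ξ' = u·ξ − x·θ, ψ' = −u·ψ + y·θ, θ' = 2(x·ψ − y·ξ), and the algebraic relation ξ·λ² − θ·λ − ψ = 0 with 2ξλ − θ never vanishing, then λ satisfies the Riccati equation λ' = x·λ² − u·λ − y. -/
theorem riccati_from_constraint
    (ξ ψ θ x y u lam : ℝ → ℂ)
    (hlam : Differentiable ℝ lam)
    (hξ : ∀ t, HasDerivAt ξ (u t * ξ t - x t * θ t) t)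
    (hψ : ∀ t, HasDerivAt ψ (-(u t) * ψ t + y t * θ t) t)
    (hθ : ∀ t, HasDerivAt θ (2 * (x t * ψ t - y t * ξ t)) t)
    (hconstraint : ∀ t, ξ t * (lam t) ^ 2 - θ t * lam t - ψ t = 0)
    (hnv : ∀ t, 2 * ξ t * lam t - θ t ≠ 0) :
    ∀ t, HasDerivAt lam (x t * (lam t) ^ 2 - u t * lam t - y t) t := by
  intro t
  have hl : HasDerivAt lam (deriv lam t) t := (hlam t).hasDerivAt
  set L := deriv lam t with hL
  have hF : HasDerivAt (fun s => ξ s * (lam s * lam s) - θ s * lam s - ψ s)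
      ((u t * ξ t - x t * θ t) * (lam t * lam t) + ξ t * (L * lam t + lam t * L)
        - ((2 * (x t * ψ t - y t * ξ t)) * lam t + θ t * L)
        - (-(u t) * ψ t + y t * θ t)) t :=
    (((hξ t).mul (hl.mul hl)).sub ((hθ t).mul hl)).sub (hψ t)
  have heq : (fun s => ξ s * (lam s * lam s) - θ s * lam s - ψ s) = fun _ => (0 : ℂ) := by
    funext s; linear_combination hconstraint s
  rw [heq] at hF
  have hD0 : (u t * ξ t - x t * θ t) * (lam t * lam t) + ξ t * (L * lam t + lam t * L)
        - ((2 * (x t * ψ t - y t * ξ t)) * lam t + θ t * L)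
        - (-(u t) * ψ t + y t * θ t) = 0 :=
    hF.unique (hasDerivAt_const t 0)
  have hc := hconstraint t
  have key : (2 * ξ t * lam t - θ t) * (L - (x t * (lam t) ^ 2 - u t * lam t - y t)) = 0 := by
    linear_combination hD0 + (u t - 2 * x t * lam t) * hc
  rcases mul_eq_zero.mp key with h | h
  · exact absurd h (hnv t)
  · have : L = x t * (lam t) ^ 2 - u t * lam t - y t := sub_eq_zero.mp h
    exact this ▸ hl
end

section
/- Suppose ξ, ψ, θ, x, y, u are differentiable with ξ' = u·ξ − x·θ, ψ' = −u·ψ + y·θ, θ' = 2(x·ψ − y·ξ), ξ never vanishes, and the discriminant identity 4ξψ + θ² = 0 holds identically. Then λ := θ/(2ξ) satisfies λ' = x·λ² − u·λ − y. -/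
/- The quotient rule gives λ' = xλ² − uλ − y + x(4ξψ + θ²)/(4ξ²) for λ = θ/(2ξ) as soon as
ξ' and θ' have the stated form; the discriminant condition kills the last term. -/

variable {𝕜 𝕜' : Type*} [NontriviallyNormedField 𝕜] [NontriviallyNormedField 𝕜']
  [NormedAlgebra 𝕜 𝕜'] [CharZero 𝕜']

theorem hasDerivAt_div_two_mul_riccati {ξ θ : 𝕜 → 𝕜'} {t : 𝕜} {u x y p : 𝕜'}
    (hξ : HasDerivAt ξ (u * ξ t - x * θ t) t)
    (hθ : HasDerivAt θ (2 * (x * p - y * ξ t)) t) (hξt : ξ t ≠ 0) :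
    HasDerivAt (fun s => θ s / (2 * ξ s))
      (x * (θ t / (2 * ξ t)) ^ 2 - u * (θ t / (2 * ξ t)) - y
        + x * (4 * ξ t * p + θ t ^ 2) / (4 * ξ t ^ 2)) t := by
  have h2ξ : 2 * ξ t ≠ 0 := mul_ne_zero two_ne_zero hξt
  refine (hθ.div (hξ.const_mul 2) h2ξ).congr_deriv ?_
  field_simp
  ring

theorem riccati_double_root_general
    (ξ ψ θ x y u : ℝ → ℂ)
    (hξ : ∀ t, HasDerivAt ξ (u t * ξ t - x t * θ t) t)
    (hθ : ∀ t, HasDerivAt θ (2 * (x t * ψ t - y t * ξ t)) t)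
    (hξne : ∀ t, ξ t ≠ 0)
    (hdisc : ∀ t, 4 * ξ t * ψ t + (θ t) ^ 2 = 0) :
    ∀ t, HasDerivAt (fun t => θ t / (2 * ξ t))
      (x t * (θ t / (2 * ξ t)) ^ 2 - u t * (θ t / (2 * ξ t)) - y t) t := by
  intro t
  simpa only [hdisc t, mul_zero, zero_div, add_zero] using
    hasDerivAt_div_two_mul_riccati (hξ t) (hθ t) (hξne t)

theorem riccati_double_root
    (ξ ψ θ x y u : ℝ → ℂ)
    (hξ : ∀ t, HasDerivAt ξ (u t * ξ t - x t * θ t) t)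
    (hψ : ∀ t, HasDerivAt ψ (-(u t) * ψ t + y t * θ t) t)
    (hθ : ∀ t, HasDerivAt θ (2 * (x t * ψ t - y t * ξ t)) t)
    (hξne : ∀ t, ξ t ≠ 0)
    (hdisc : ∀ t, 4 * ξ t * ψ t + (θ t) ^ 2 = 0) :
    ∀ t, HasDerivAt (fun t => θ t / (2 * ξ t))
      (x t * (θ t / (2 * ξ t)) ^ 2 - u t * (θ t / (2 * ξ t)) - y t) t :=
  riccati_double_root_general ξ ψ θ x y u hξ hθ hξne hdisc
end

section
/- If ξ, ψ, θ are differentiable and satisfy ξ' = u·ξ − x·θ, ψ' = −u·ψ + y·θ, θ' = 2(x·ψ − y·ξ), then the quantity 4ξψ + θ² is constant (its derivative vanishes identically). -/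
theorem HasDerivAt.four_mul_mul_add_sq {𝕜 𝔸 : Type*} [NontriviallyNormedField 𝕜]
    [NormedCommRing 𝔸] [NormedAlgebra 𝕜 𝔸] {ξ ψ θ : 𝕜 → 𝔸} {ξ' ψ' θ' : 𝔸} {t : 𝕜}
    (hξ : HasDerivAt ξ ξ' t) (hψ : HasDerivAt ψ ψ' t) (hθ : HasDerivAt θ θ' t) :
    HasDerivAt (fun s => 4 * ξ s * ψ s + θ s ^ 2)
      (4 * (ξ' * ψ t + ξ t * ψ') + 2 * θ t * θ') t :=
  (((hξ.const_mul 4).fun_mul hψ).fun_add (hθ.fun_pow 2)).congr_deriv (by norm_num; ring)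

theorem discriminant_is_constant
    (ξ ψ θ x y u : ℝ → ℂ)
    (hξ : ∀ t, HasDerivAt ξ (u t * ξ t - x t * θ t) t)
    (hψ : ∀ t, HasDerivAt ψ (-(u t) * ψ t + y t * θ t) t)
    (hθ : ∀ t, HasDerivAt θ (2 * (x t * ψ t - y t * ξ t)) t) :
    ∀ t, HasDerivAt (fun t => 4 * ξ t * ψ t + (θ t) ^ 2) 0 t := fun t =>
  ((hξ t).four_mul_mul_add_sq (hψ t) (hθ t)).congr_deriv (by ring)
end

section
/- The coupled Hamiltonian H of the paper, viewed as a polynomial in q₁,q₂,q₃,p₁,p₂,p₃ with parameters α₀,...,α₆ and s, is invariant under the substitution q₁ ↔ q₃, p₁ ↔ p₃, α₀ ↔ α₁, α₂ ↔ α₆ (fixing q₂, p₂, s, α₃, α₄, α₅). -/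
/-- The Painlevé VI Hamiltonian with `β₂ = (1 - β₀ - β₁ - β₃ - β₄)/2`. -/
noncomputable def HVI (p q s b0 b1 b3 b4 : ℂ) : ℂ :=
  q * (q - 1) * (q - s) * p ^ 2 -
    ((b1 - 1) * q * (q - 1) + b3 * q * (q - s) + b4 * (q - 1) * (q - s)) * p +
    ((1 - b0 - b1 - b3 - b4) / 2) * (b0 + (1 - b0 - b1 - b3 - b4) / 2) * q

/-- The coupled Painlevé VI Hamiltonian of the paper. -/
noncomputable def H (q1 q2 q3 p1 p2 p3 s a0 a1 a2 a3 a4 a5 a6 : ℂ) : ℂ :=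
  HVI p1 q1 s a3 (1 - a1 - 2 * a2 - 2 * a3) a1 a3 +
  HVI p2 q2 s a3 (1 - 2 * a3 - 2 * a4 - a5) a5 a3 +
  HVI p3 q3 s a3 (1 - a0 - 2 * a3 - 2 * a6) a0 a3 +
  ((q1 - 1) * p1 + a2) * ((q2 - 1) * p2 + a4) * (q1 * q2 + s) +
  ((q1 - 1) * p1 + a2) * ((q3 - 1) * p3 + a6) * (q1 * q3 + s) +
  ((q2 - 1) * p2 + a4) * ((q3 - 1) * p3 + a6) * (q2 * q3 + s)

theorem H_pi1_invariant (q1 q2 q3 p1 p2 p3 s a0 a1 a2 a3 a4 a5 a6 : ℂ)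
    (hα : a0 + a1 + 2 * a2 + 3 * a3 + 2 * a4 + a5 + 2 * a6 = 1) :
    H q3 q2 q1 p3 p2 p1 s a1 a0 a6 a3 a4 a5 a2 =
      H q1 q2 q3 p1 p2 p3 s a0 a1 a2 a3 a4 a5 a6 := by
  unfold H HVI; ring
end
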